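/- arXiv:2505.01256 — 6 statements merged into one kernel-verified Lean document; each statement's English description precedes it below -/
import Mathlib

section
/- The function g(x) = (2n/(3x) + 1/2)^(x/2) is strictly monotone increasing on the open interval (0, n/4), for any positive real n. -/
open Real Set

/-! Writing `c = 2n/3`, `log g(x) = (x/2) log(c/x + 1/2)`, whose derivative in `x` is
`(1/2) (log u - (u - 1/2)/u)` with `u = c/x + 1/2`. The fraction is below `1`, and on `(0, n/4)` we
have `u > 8/3 + 1/2 > e`, so `log u > 1`. -/

lemma hasDerivAt_mul_log_div_add {a c x : ℝ} (hx : x ≠ 0) (hu : c / x + a ≠ 0) :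
    HasDerivAt (fun y => y * log (c / y + a))
      (log (c / x + a) - c / x / (c / x + a)) x := by
  have hinner : HasDerivAt (fun y => c / y + a) (-c / x ^ 2) x := by
    simpa [div_eq_mul_inv, neg_div] using ((hasDerivAt_inv hx).const_mul c).add_const a
  refine ((hasDerivAt_id' x).mul (hinner.log hu)).congr_deriv ?_
  field_simp
  ring

lemma strictMonoOn_mul_log_div_add {a b c : ℝ} (ha : 0 ≤ a) (hc : 0 < c)
    (hb : exp 1 ≤ c / b + a) :
    StrictMonoOn (fun x => x * log (c / x + a)) (Ioo 0 b) := by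
  have he : ∀ x ∈ Ioo 0 b, exp 1 < c / x + a := fun x hx =>
    hb.trans_lt (by gcongr; exacts [hx.1, hx.2])
  have hu : ∀ x ∈ Ioo 0 b, 0 < c / x + a := fun x hx => (exp_pos 1).trans (he x hx)
  have hderiv : ∀ x ∈ Ioo 0 b, HasDerivAt (fun y => y * log (c / y + a))
      (log (c / x + a) - c / x / (c / x + a)) x := fun x hx =>
    hasDerivAt_mul_log_div_add hx.1.ne' (hu x hx).ne'
  refine strictMonoOn_of_deriv_pos (convex_Ioo 0 b)
    (fun x hx => (hderiv x hx).continuousAt.continuousWithinAt) fun x hx => ?_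
  rw [interior_Ioo] at hx
  rw [(hderiv x hx).deriv, sub_pos]
  calc c / x / (c / x + a) ≤ 1 := div_le_one_of_le₀ (by linarith) (hu x hx).le
    _ < log (c / x + a) := (lt_log_iff_exp_lt (hu x hx)).2 (he x hx)

lemma StrictMonoOn.rpow_const_mul_of_mul_log {f : ℝ → ℝ} {s : Set ℝ} {k : ℝ}
    (hf : ∀ x ∈ s, 0 < f x) (hk : 0 < k) (hmono : StrictMonoOn (fun x => x * log (f x)) s) :
    StrictMonoOn (fun x => f x ^ (x * k)) s := by
  intro x hx y hy hxy
  simp only [rpow_def_of_pos (hf x hx), rpow_def_of_pos (hf y hy), exp_lt_exp]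
  nlinarith [hmono hx hy hxy]

theorem stmt_0 (n : ℝ) (hn : 0 < n) :
    StrictMonoOn (fun x : ℝ => (2 * n / (3 * x) + 1 / 2) ^ (x / 2))
      (Set.Ioo 0 (n / 4)) := by
  have hbound : exp 1 ≤ 2 * n / 3 / (n / 4) + 1 / 2 := by
    have : 2 * n / 3 / (n / 4) = 8 / 3 := by field_simp; norm_num
    linarith [exp_one_lt_d9]
  have hmono := strictMonoOn_mul_log_div_add (by norm_num) (by positivity) hbound
  have hpos : ∀ x ∈ Ioo 0 (n / 4), 0 < 2 * n / 3 / x + 1 / 2 := fun x hx => by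
    have := hx.1; positivity
  convert hmono.rpow_const_mul_of_mul_log hpos one_half_pos using 3 with x <;> ring
end

section
/- For every p ∈ [0,1] and every positive integer λ, the quantity 1 - (1-p)^λ lies in the interval [pλ/(1+pλ), 2pλ/(1+pλ)]. -/
/-!
Clearing denominators, the two bounds read `(1 - p)ⁿ (1 + pn) ≤ 1` and
`1 - pn ≤ (1 - p)ⁿ (1 + pn)`. The first follows from Bernoulli's inequality `1 + pn ≤ (1 + p)ⁿ`
and `(1 - p)(1 + p) = 1 - p² ≤ 1`; the second from Bernoulli's inequality `1 - pn ≤ (1 - p)ⁿ`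
and `1 ≤ 1 + pn`.
-/

section BernoulliBounds

variable {R : Type*} [CommRing R] [LinearOrder R] [IsStrictOrderedRing R] {p : R}

theorem pow_one_sub_mul_one_add_mul_le_one (hp₀ : -1 ≤ p) (hp₁ : p ≤ 1) (n : ℕ) :
    (1 - p) ^ n * (1 + n * p) ≤ 1 :=
  calc (1 - p) ^ n * (1 + n * p)
      ≤ (1 - p) ^ n * (1 + p) ^ n :=
        mul_le_mul_of_nonneg_left (one_add_mul_le_pow (by linarith) n)
          (pow_nonneg (by linarith) n)
    _ = (1 - p ^ 2) ^ n := by rw [← mul_pow]; ring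
    _ ≤ 1 := pow_le_one₀ (by nlinarith) (by nlinarith)

theorem one_sub_mul_le_pow_one_sub_mul_one_add_mul (hp₀ : 0 ≤ p) (hp₁ : p ≤ 1) (n : ℕ) :
    1 - n * p ≤ (1 - p) ^ n * (1 + n * p) :=
  calc 1 - n * p = 1 + n * ((1 - p) - 1) := by ring
    _ ≤ (1 - p) ^ n := one_add_mul_sub_le_pow (by linarith) n
    _ ≤ (1 - p) ^ n * (1 + n * p) :=
        le_mul_of_one_le_right (pow_nonneg (by linarith) n)
          (le_add_of_nonneg_right (mul_nonneg n.cast_nonneg hp₀))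

end BernoulliBounds

theorem stmt_2_general (p : ℝ) (hp : p ∈ Set.Icc (0 : ℝ) 1) (l : ℕ) :
    1 - (1 - p) ^ l ∈ Set.Icc (p * l / (1 + p * l)) (2 * p * l / (1 + p * l)) := by
  obtain ⟨hp₀, hp₁⟩ := hp
  have hpos : 0 < 1 + p * l := by positivity
  have lower := pow_one_sub_mul_one_add_mul_le_one (by linarith) hp₁ l
  have upper := one_sub_mul_le_pow_one_sub_mul_one_add_mul hp₀ hp₁ l
  rw [Set.mem_Icc, div_le_iff₀ hpos, le_div_iff₀ hpos]
  constructor <;> linarith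

theorem stmt_2 (p : ℝ) (hp : p ∈ Set.Icc (0 : ℝ) 1) (l : ℕ) (hl : 1 ≤ l) :
    1 - (1 - p) ^ l ∈ Set.Icc (p * l / (1 + p * l)) (2 * p * l / (1 + p * l)) :=
  stmt_2_general p hp l
end

section
/- Let v, w ∈ [0,1]^d with d ≥ 2, and suppose there exist indices i ≠ j and reals ℓ₁, ℓ₂ ≥ 1/F (for some F > 0) such that w_i = v_i + ℓ₁ and w_j = v_j - ℓ₂. Let φ be the angle between v and w (i.e., cos φ = (v·w)/(|v||w|)). Then sin(φ) ≥ 1/(√d · F). -/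
/-!
The sine of the angle between `v` and `w` is `‖w - c • v‖ / ‖w‖` for the coefficient `c` of the
orthogonal projection of `w` onto `ℝ v`. No multiple `c • v` of a nonnegative vector can be close
to `w`: for `c ≤ 1` the `i`-th coordinate of `w - c • v` is at least `ℓ₁`, for `c ≥ 1` the `j`-th
is at most `-ℓ₂`. Since `‖w‖ ≤ √d`, this gives `sin φ ≥ (1 / F) / √d`.
-/

open Real
open scoped InnerProductSpace

theorem sin_mul_norm_eq_norm_sub_smul {V : Type*} [NormedAddCommGroup V] [InnerProductSpace ℝ V]
    {x y : V} (hx : x ≠ 0) {φ : ℝ} (hφ : φ ∈ Set.Icc 0 π)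
    (hcos : cos φ = ⟪x, y⟫_ℝ / (‖x‖ * ‖y‖)) :
    sin φ * ‖y‖ = ‖y - (⟪x, y⟫_ℝ / ‖x‖ ^ 2) • x‖ := by
  rcases eq_or_ne y 0 with rfl | hy
  · simp
  have hx' : 0 < ‖x‖ := norm_pos_iff.mpr hx
  have hy' : 0 < ‖y‖ := norm_pos_iff.mpr hy
  have hsin : 0 ≤ sin φ := sin_nonneg_of_nonneg_of_le_pi hφ.1 hφ.2
  rw [← sq_eq_sq₀ (by positivity) (norm_nonneg _), mul_pow, sin_sq, hcos, norm_sub_sq_real,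
    real_inner_smul_right, norm_smul, real_inner_comm, Real.norm_eq_abs, mul_pow, sq_abs]
  field_simp
  ring

theorem EuclideanSpace.le_norm_sub_smul {ι : Type*} [Fintype ι] {v w : EuclideanSpace ℝ ι}
    {i j : ι} (hvi : 0 ≤ v i) (hvj : 0 ≤ v j) {r : ℝ} (hri : r ≤ w i - v i)
    (hrj : r ≤ v j - w j) (c : ℝ) : r ≤ ‖w - c • v‖ := by
  rcases le_total c 1 with hc | hc
  · calc r ≤ (w - c • v) i := by simp only [PiLp.sub_apply, PiLp.smul_apply, smul_eq_mul]; nlinarith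
      _ ≤ ‖(w - c • v) i‖ := le_abs_self _
      _ ≤ ‖w - c • v‖ := PiLp.norm_apply_le _ i
  · calc r ≤ -(w - c • v) j := by simp only [PiLp.sub_apply, PiLp.smul_apply, smul_eq_mul]; nlinarith
      _ ≤ ‖(w - c • v) j‖ := neg_le_abs _
      _ ≤ ‖w - c • v‖ := PiLp.norm_apply_le _ j

theorem EuclideanSpace.norm_le_sqrt_card {ι : Type*} [Fintype ι] {w : EuclideanSpace ℝ ι}
    (hw : ∀ k, |w k| ≤ 1) : ‖w‖ ≤ √(Fintype.card ι) := by
  rw [EuclideanSpace.norm_eq]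
  gcongr
  calc ∑ k, ‖w k‖ ^ 2 ≤ ∑ _k : ι, (1 : ℝ) := by
        gcongr with k
        rw [Real.norm_eq_abs, sq_abs]
        nlinarith [hw k, abs_nonneg (w k), sq_abs (w k)]
    _ = Fintype.card ι := by simp

theorem stmt_5_general (d : ℕ) (F : ℝ) (hF : 0 < F)
    (v w : EuclideanSpace ℝ (Fin d))
    (hv01 : ∀ i, v i ∈ Set.Icc (0 : ℝ) 1) (hw01 : ∀ i, w i ∈ Set.Icc (0 : ℝ) 1)
    (hv : v ≠ 0) (hw : w ≠ 0)
    (i j : Fin d) (l₁ l₂ : ℝ) (hl₁ : 1 / F ≤ l₁) (hl₂ : 1 / F ≤ l₂)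
    (hwi : w i = v i + l₁) (hwj : w j = v j - l₂)
    (φ : ℝ) (hφ : φ ∈ Set.Icc (0 : ℝ) Real.pi)
    (hcos : Real.cos φ = (inner ℝ v w : ℝ) / (‖v‖ * ‖w‖)) :
    1 / (Real.sqrt d * F) ≤ Real.sin φ := by
  have hsin := sin_mul_norm_eq_norm_sub_smul hv hφ hcos
  have hres : 1 / F ≤ ‖w - (⟪v, w⟫_ℝ / ‖v‖ ^ 2) • v‖ :=
    EuclideanSpace.le_norm_sub_smul (hv01 i).1 (hv01 j).1 (by linarith) (by linarith) _
  have hwd : ‖w‖ ≤ √d := by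
    simpa using EuclideanSpace.norm_le_sqrt_card fun k ↦ abs_le.mpr
      ⟨by linarith [(hw01 k).1], (hw01 k).2⟩
  have hw' : 0 < ‖w‖ := norm_pos_iff.mpr hw
  calc 1 / (√d * F) = (1 / F) / √d := by rw [div_div, mul_comm]
    _ ≤ (1 / F) / ‖w‖ := div_le_div_of_nonneg_left (by positivity) hw' hwd
    _ ≤ ‖w - (⟪v, w⟫_ℝ / ‖v‖ ^ 2) • v‖ / ‖w‖ := by gcongr
    _ = sin φ := by rw [← hsin, mul_div_cancel_right₀ _ hw'.ne']

theorem stmt_5 (d : ℕ) (hd : 2 ≤ d) (F : ℝ) (hF : 0 < F)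
    (v w : EuclideanSpace ℝ (Fin d))
    (hv01 : ∀ i, v i ∈ Set.Icc (0 : ℝ) 1) (hw01 : ∀ i, w i ∈ Set.Icc (0 : ℝ) 1)
    (hv : v ≠ 0) (hw : w ≠ 0)
    (i j : Fin d) (hij : i ≠ j) (l₁ l₂ : ℝ) (hl₁ : 1 / F ≤ l₁) (hl₂ : 1 / F ≤ l₂)
    (hwi : w i = v i + l₁) (hwj : w j = v j - l₂)
    (φ : ℝ) (hφ : φ ∈ Set.Icc (0 : ℝ) Real.pi)
    (hcos : Real.cos φ = (inner ℝ v w : ℝ) / (‖v‖ * ‖w‖)) :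
    1 / (Real.sqrt d * F) ≤ Real.sin φ :=
  stmt_5_general d F hF v w hv01 hw01 hv hw i j l₁ l₂ hl₁ hl₂ hwi hwj φ hφ hcos
end

section
/- Let b ∈ [0,1]^d with b₁ + ⋯ + b_d = 1 and let p be a positive integer. Then there exists a point r = (a₁/p, …, a_d/p) with a_i ∈ ℕ and a₁ + ⋯ + a_d = p such that |b_i - r_i| ≤ 1/p for every i. -/
/-!
Cumulative rounding: with partial sums `Sₖ = p (b₁ + ⋯ + bₖ)`, take `aₖ = ⌊Sₖ⌋ - ⌊Sₖ₋₁⌋`.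
The `aₖ` telescope to `⌊S_d⌋ = p`, and `p bₖ - aₖ` is a difference of two fractional parts,
hence lies in `(-1, 1)`.
-/

open Finset

lemma abs_sub_sub_natFloor_sub_lt_one {x y : ℝ} (hx : 0 ≤ x) (hy : 0 ≤ y) :
    |(y - x) - ((⌊y⌋₊ : ℝ) - ⌊x⌋₊)| < 1 := by
  have := Nat.floor_le hx
  have := Nat.floor_le hy
  have := Nat.lt_floor_add_one x
  have := Nat.lt_floor_add_one y
  rw [abs_lt]
  constructor <;> linarith

theorem exists_nat_sum_eq_floor_sum_and_abs_sub_lt_one :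
    ∀ {n : ℕ} (x : Fin n → ℝ), (∀ i, 0 ≤ x i) →
      ∃ a : Fin n → ℕ, ∑ i, a i = ⌊∑ i, x i⌋₊ ∧ ∀ i, |x i - a i| < 1
  | 0, _, _ => ⟨finZeroElim, by simp, finZeroElim⟩
  | n + 1, x, hx => by
    obtain ⟨a, ha_sum, ha⟩ :=
      exists_nat_sum_eq_floor_sum_and_abs_sub_lt_one (fun i : Fin n => x i.castSucc) fun i => hx _
    set s := ∑ i : Fin n, x i.castSucc
    have hs : 0 ≤ s := sum_nonneg fun i _ => hx _
    have hsum : ∑ i, x i = s + x (Fin.last n) := Fin.sum_univ_castSucc x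
    have hfloor : ⌊s⌋₊ ≤ ⌊∑ i, x i⌋₊ := Nat.floor_le_floor (by linarith [hx (Fin.last n)])
    refine ⟨Fin.snoc a (⌊∑ i, x i⌋₊ - ⌊s⌋₊), ?_, fun i => ?_⟩
    · rw [Fin.sum_univ_castSucc, Fin.snoc_last]
      simp only [Fin.snoc_castSucc]
      omega
    · induction i using Fin.lastCases with
      | last =>
        rw [Fin.snoc_last, Nat.cast_sub hfloor,
          show x (Fin.last n) = ∑ i, x i - s by linarith]
        exact abs_sub_sub_natFloor_sub_lt_one hs (by linarith [hx (Fin.last n)])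
      | cast i => simpa only [Fin.snoc_castSucc] using ha i

theorem stmt_6 (d : ℕ) (b : Fin d → ℝ) (hb : ∀ i, b i ∈ Set.Icc (0 : ℝ) 1)
    (hsum : ∑ i, b i = 1) (p : ℕ) (hp : 1 ≤ p) :
    ∃ a : Fin d → ℕ, (∑ i, a i = p) ∧ ∀ i, |b i - (a i : ℝ) / p| ≤ 1 / p := by
  have hp' : (0 : ℝ) < p := by exact_mod_cast hp
  obtain ⟨a, ha_sum, ha⟩ :=
    exists_nat_sum_eq_floor_sum_and_abs_sub_lt_one (fun i => p * b i)
      fun i => mul_nonneg hp'.le (hb i).1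
  refine ⟨a, by rwa [← mul_sum, hsum, mul_one, Nat.floor_natCast] at ha_sum, fun i => ?_⟩
  calc |b i - a i / p| = |p * b i - a i| / p := by
        rw [show b i - a i / p = (p * b i - a i) / p by field_simp, abs_div, abs_of_pos hp']
    _ ≤ 1 / p := by gcongr; exact (ha i).le
end

section
/- A maximum set of mutually incomparable solutions for the d-COCZ function has cardinality exactly (n/d + 1)^{d/2}. In particular, if S is any set of search points in {0,1}^n that are pairwise incomparable under d-COCZ, then |S| ≤ (n/d + 1)^{d/2}, and this bound is attained by any Pareto optimal set with pairwise distinct fitness vectors. -/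
/-- The `j`-th objective (0-indexed) of the d-objective COCZ function on
`{0,1}^n`: the number of ones in the first half plus, for even `j.val`
(1-based odd `j`), the number of ones in the corresponding block of length
`n/d` of the second half, and for odd `j.val` the number of zeros in that
block. -/
def cocz (d n : ℕ) (x : Fin n → Bool) (j : Fin d) : ℕ :=
  (Finset.univ.filter (fun i : Fin n => (i : ℕ) < n / 2 ∧ x i = true)).card +
  if j.val % 2 = 0 then
    (Finset.univ.filter (fun i : Fin n =>
      n / 2 + (j.val / 2) * (n / d) ≤ (i : ℕ) ∧
      (i : ℕ) < n / 2 + (j.val / 2) * (n / d) + n / d ∧ x i = true)).card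
  else
    (Finset.univ.filter (fun i : Fin n =>
      n / 2 + (j.val / 2) * (n / d) ≤ (i : ℕ) ∧
      (i : ℕ) < n / 2 + (j.val / 2) * (n / d) + n / d ∧ x i = false)).card

/-- `x` and `y` are incomparable under d-COCZ. -/
def coczIncomparable (d n : ℕ) (x y : Fin n → Bool) : Prop :=
  ¬ (∀ j : Fin d, cocz d n y j ≤ cocz d n x j) ∧
  ¬ (∀ j : Fin d, cocz d n x j ≤ cocz d n y j)

/-!
Every objective is the number of ones in the first half plus either the number of ones or the
number of zeros of one of the `d / 2` blocks of length `n / d` in the second half. Hence two points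
with the same block profile (numbers of ones per block) are comparable, the one with more ones in
the first half dominating, so a set of pairwise incomparable points injects into the
`(n / d + 1) ^ (d / 2)` profiles. Conversely, among points with a full first half, any two with
different profiles differ in some block `k`, where objectives `2k` and `2k + 1` disagree.
-/

open Finset

lemma Fin.card_filter_val_mem_Ico {n a b : ℕ} (h : b ≤ n) :
    #{i : Fin n | a ≤ (i : ℕ) ∧ (i : ℕ) < b} = b - a := by
  rw [← card_map Fin.valEmbedding, map_filter', Fin.map_valEmbedding_univ, ← Nat.card_Ico]
  congr 1
  ext i
  simp only [mem_filter, mem_Iio, Fin.valEmbedding_apply, mem_Ico]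
  constructor
  · rintro ⟨-, j, hj, rfl⟩
    exact hj
  · intro hi
    exact ⟨by omega, ⟨i, by omega⟩, hi, rfl⟩

namespace Cocz

variable {d n : ℕ}

def countIn (x : Fin n → Bool) (a m : ℕ) (b : Bool) : ℕ :=
  #{i : Fin n | a ≤ (i : ℕ) ∧ (i : ℕ) < a + m ∧ x i = b}

lemma countIn_le (x : Fin n → Bool) (a m : ℕ) (b : Bool) : countIn x a m b ≤ m := by
  calc countIn x a m b ≤ #(Ico a (a + m)) :=
        card_le_card_of_injOn (fun i => (i : ℕ))
          (fun i hi => by simp only [coe_filter, mem_univ, true_and, Set.mem_ofPred_eq] at hi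
                          simp [hi.1, hi.2.1])
          (fun _ _ _ _ h => Fin.val_injective h)
    _ = m := by simp

lemma countIn_true_add_countIn_false (x : Fin n → Bool) {a m : ℕ} (h : a + m ≤ n) :
    countIn x a m true + countIn x a m false = m := by
  have hsplit := card_filter_add_card_filter_not
    (s := {i : Fin n | a ≤ (i : ℕ) ∧ (i : ℕ) < a + m}) (fun i => x i = true)
  simp only [filter_filter, Bool.not_eq_true, Fin.card_filter_val_mem_Ico h,
    add_tsub_cancel_left] at hsplit
  simpa only [countIn, and_assoc] using hsplit

def firstHalfOnes (x : Fin n → Bool) : ℕ :=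
  #{i : Fin n | (i : ℕ) < n / 2 ∧ x i = true}

/-- Block `k` of the second half, of length `n / d`, is shared by the objectives `2k` and
`2k + 1` (0-indexed). -/
def blockStart (d n k : ℕ) : ℕ := n / 2 + k * (n / d)

lemma blockStart_add_le (hk : k < d / 2) : blockStart d n k + n / d ≤ n := by
  have hblocks : (k + 1) * (n / d) ≤ d / 2 * (n / d) := Nat.mul_le_mul_right _ hk
  have hhalf : d / 2 * (n / d) * 2 ≤ n :=
    calc d / 2 * (n / d) * 2 = d / 2 * 2 * (n / d) := by ring
      _ ≤ d * (n / d) := Nat.mul_le_mul_right _ (Nat.div_mul_le_self d 2)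
      _ ≤ n := Nat.mul_div_le n d
  rw [add_one_mul] at hblocks
  unfold blockStart
  omega

def profile (d n : ℕ) (x : Fin n → Bool) (k : Fin (d / 2)) : Fin (n / d + 1) :=
  ⟨countIn x (blockStart d n k) (n / d) true, Nat.lt_succ_of_le (countIn_le ..)⟩

lemma cocz_eq_profile (hd : 2 ∣ d) (x : Fin n → Bool) (j : Fin d) :
    cocz d n x j = firstHalfOnes x +
      if j.val % 2 = 0 then (profile d n x ⟨j / 2, by omega⟩ : ℕ)
      else n / d - profile d n x ⟨j / 2, by omega⟩ := by
  have hblock := countIn_true_add_countIn_false x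
    (blockStart_add_le (d := d) (n := n) (k := j / 2) (by omega))
  change firstHalfOnes x + (if j.val % 2 = 0 then countIn x (blockStart d n (j / 2)) (n / d) true
    else countIn x (blockStart d n (j / 2)) (n / d) false) = _
  split_ifs
  · rfl
  · simp only [profile]
    omega

lemma cocz_le_cocz_of_profile_eq (hd : 2 ∣ d) {x y : Fin n → Bool}
    (hprofile : profile d n x = profile d n y) (hfirst : firstHalfOnes x ≤ firstHalfOnes y)
    (j : Fin d) : cocz d n x j ≤ cocz d n y j := by
  rw [cocz_eq_profile hd, cocz_eq_profile hd, hprofile]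
  split_ifs <;> omega

lemma not_coczIncomparable_of_profile_eq (hd : 2 ∣ d) {x y : Fin n → Bool}
    (hprofile : profile d n x = profile d n y) : ¬ coczIncomparable d n x y := by
  rintro ⟨hyx, hxy⟩
  rcases le_total (firstHalfOnes x) (firstHalfOnes y) with h | h
  · exact hxy (cocz_le_cocz_of_profile_eq hd hprofile h)
  · exact hyx (cocz_le_cocz_of_profile_eq hd hprofile.symm h)

lemma coczIncomparable_comm {x y : Fin n → Bool} :
    coczIncomparable d n x y ↔ coczIncomparable d n y x :=
  and_comm

lemma coczIncomparable_of_profile_lt (hd : 2 ∣ d) {x y : Fin n → Bool}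
    (hfirst : firstHalfOnes x = firstHalfOnes y) {k : Fin (d / 2)}
    (hk : profile d n x k < profile d n y k) : coczIncomparable d n x y := by
  have hk' : (profile d n x k : ℕ) < profile d n y k := hk
  have hle := (profile d n y k).is_lt
  constructor
  · intro h
    have := h ⟨2 * k, by omega⟩
    simp only [cocz_eq_profile hd, show 2 * (k : ℕ) % 2 = 0 by omega,
      show 2 * (k : ℕ) / 2 = k by omega, Fin.eta, if_true] at this
    omega
  · intro h
    have := h ⟨2 * k + 1, by omega⟩
    simp only [cocz_eq_profile hd, show (2 * (k : ℕ) + 1) % 2 = 1 by omega,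
      show (2 * (k : ℕ) + 1) / 2 = k by omega, Fin.eta, one_ne_zero, if_false] at this
    omega

lemma coczIncomparable_of_profile_ne (hd : 2 ∣ d) {x y : Fin n → Bool}
    (hfirst : firstHalfOnes x = firstHalfOnes y) (hprofile : profile d n x ≠ profile d n y) :
    coczIncomparable d n x y := by
  obtain ⟨k, hk⟩ := Function.ne_iff.mp hprofile
  rcases lt_or_gt_of_ne hk with hlt | hgt
  · exact coczIncomparable_of_profile_lt hd hfirst hlt
  · exact coczIncomparable_comm.mp (coczIncomparable_of_profile_lt hd hfirst.symm hgt)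

theorem card_le_of_pairwise_coczIncomparable (hd : 2 ∣ d) (S : Finset (Fin n → Bool))
    (hS : ∀ x ∈ S, ∀ y ∈ S, x ≠ y → coczIncomparable d n x y) :
    #S ≤ (n / d + 1) ^ (d / 2) :=
  calc #S ≤ Fintype.card (Fin (d / 2) → Fin (n / d + 1)) :=
        card_le_card_of_injOn (profile d n) (fun _ _ => mem_univ _)
          fun x hx y hy hxy => by_contra fun hne =>
            not_coczIncomparable_of_profile_eq hd hxy (hS x hx y hy hne)
    _ = (n / d + 1) ^ (d / 2) := by simp

lemma eq_of_mem_block {k k' i : ℕ}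
    (hk : blockStart d n k ≤ i ∧ i < blockStart d n k + n / d)
    (hk' : blockStart d n k' ≤ i ∧ i < blockStart d n k' + n / d) : k = k' := by
  unfold blockStart at hk hk'
  have hdiv : (i - n / 2) / (n / d) = k :=
    Nat.div_eq_of_lt_le (by omega) (by rw [add_one_mul]; omega)
  have hdiv' : (i - n / 2) / (n / d) = k' :=
    Nat.div_eq_of_lt_le (by omega) (by rw [add_one_mul]; omega)
  rw [← hdiv, hdiv']

/-- The Pareto optimal point with block profile `v`. -/
def paretoPoint (d n : ℕ) (v : Fin (d / 2) → Fin (n / d + 1)) (i : Fin n) : Bool :=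
  decide ((i : ℕ) < n / 2 ∨
    ∃ k : Fin (d / 2), blockStart d n k ≤ i ∧ (i : ℕ) < blockStart d n k + v k)

lemma firstHalfOnes_paretoPoint (v : Fin (d / 2) → Fin (n / d + 1)) :
    firstHalfOnes (paretoPoint d n v) = n / 2 := by
  unfold firstHalfOnes
  rw [filter_congr (q := fun i : Fin n => (i : ℕ) < n / 2) fun i _ => by simp_all [paretoPoint],
    Fin.card_filter_val_lt]
  omega

lemma profile_paretoPoint (v : Fin (d / 2) → Fin (n / d + 1)) :
    profile d n (paretoPoint d n v) = v := by
  funext k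
  have hv := (v k).is_lt
  have hfit := blockStart_add_le (d := d) (n := n) k.is_lt
  have hblock : ∀ i : Fin n, (blockStart d n k ≤ i ∧ (i : ℕ) < blockStart d n k + n / d ∧
      paretoPoint d n v i = true) ↔
        (blockStart d n k ≤ i ∧ (i : ℕ) < blockStart d n k + v k) := by
    intro i
    simp only [paretoPoint, decide_eq_true_eq]
    constructor
    · rintro ⟨hlo, hhi, hlt | ⟨k', hk'⟩⟩
      · unfold blockStart at hlo
        omega
      · have hv' := (v k').is_lt
        obtain rfl : k' = k := Fin.ext (eq_of_mem_block ⟨hk'.1, by omega⟩ ⟨hlo, hhi⟩)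
        exact hk'
    · rintro ⟨hlo, hhi⟩
      exact ⟨hlo, by omega, Or.inr ⟨k, hlo, hhi⟩⟩
  refine Fin.ext ?_
  change #{i : Fin n | _} = _
  rw [filter_congr fun i _ => hblock i, Fin.card_filter_val_mem_Ico (by omega)]
  omega

lemma coczIncomparable_paretoPoint (hd : 2 ∣ d) {v w : Fin (d / 2) → Fin (n / d + 1)}
    (hvw : v ≠ w) : coczIncomparable d n (paretoPoint d n v) (paretoPoint d n w) :=
  coczIncomparable_of_profile_ne hd
    (by rw [firstHalfOnes_paretoPoint, firstHalfOnes_paretoPoint])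
    (by rwa [profile_paretoPoint, profile_paretoPoint])

end Cocz

theorem stmt_10_general (d n : ℕ) (hde : 2 ∣ d) :
    (∀ S : Finset (Fin n → Bool),
      (∀ x ∈ S, ∀ y ∈ S, x ≠ y → coczIncomparable d n x y) →
        S.card ≤ (n / d + 1) ^ (d / 2)) ∧
    (∃ S : Finset (Fin n → Bool),
      (∀ x ∈ S, ∀ y ∈ S, x ≠ y → coczIncomparable d n x y) ∧
        S.card = (n / d + 1) ^ (d / 2)) := by
  have hinj : Function.Injective (Cocz.paretoPoint d n) :=
    Function.LeftInverse.injective Cocz.profile_paretoPoint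
  refine ⟨Cocz.card_le_of_pairwise_coczIncomparable hde,
    univ.image (Cocz.paretoPoint d n), ?_, ?_⟩
  · simp only [mem_image, mem_univ, true_and]
    rintro _ ⟨v, rfl⟩ _ ⟨w, rfl⟩ hne
    exact Cocz.coczIncomparable_paretoPoint hde (ne_of_apply_ne _ hne)
  · rw [card_image_of_injective _ hinj]
    simp

theorem stmt_10 (d n : ℕ) (hd : 0 < d) (hde : 2 ∣ d) (hdn : d ∣ n) :
    (∀ S : Finset (Fin n → Bool),
      (∀ x ∈ S, ∀ y ∈ S, x ≠ y → coczIncomparable d n x y) →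
        S.card ≤ (n / d + 1) ^ (d / 2)) ∧
    (∃ S : Finset (Fin n → Bool),
      (∀ x ∈ S, ∀ y ∈ S, x ≠ y → coczIncomparable d n x y) ∧
        S.card = (n / d + 1) ^ (d / 2)) :=
  stmt_10_general d n hde
end

section
/- The number of distinct fitness vectors of the d-COCZ function on {0,1}^n equals (n/2 + 1)·(n/d + 1)^{d/2}. -/
/-!
Cut `{0,1}^n` into the first half and the `d/2` blocks of length `n/d` of the second half.
Objectives `2k` and `2k+1` (0-indexed) add to the number of ones in the first half the number of
ones, resp. zeros, in block `k`, so the objective vector is a function of the vector of counts of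
ones in these parts. Since the parts are disjoint, every count vector bounded by the part sizes
occurs, and the function is injective on such vectors: objectives `0` and `1` recover the
first-half count, and then the even objectives recover each block count. So the image has
`(n/2 + 1) (n/d + 1)^(d/2)` elements.
-/

open Finset Function

theorem card_filter_false_eq_sub {α : Type*} (s : Finset α) (x : α → Bool) :
    #{i ∈ s | x i = false} = #s - #{i ∈ s | x i = true} := by
  have := card_filter_add_card_filter_not (s := s) (fun i => x i = true)
  simp only [Bool.not_eq_true] at this
  omega

theorem image_card_filter_eq_piFinset {α ι : Type*} [Fintype α] [DecidableEq α] [Fintype ι]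
    [DecidableEq ι] {S : ι → Finset α} (hS : Pairwise (Disjoint on S)) :
    univ.image (fun (x : α → Bool) (t : ι) => #{i ∈ S t | x i = true}) =
      Fintype.piFinset fun t => range (#(S t) + 1) := by
  ext c
  simp only [mem_image, mem_univ, true_and, Fintype.mem_piFinset, mem_range, Nat.lt_succ_iff]
  constructor
  · rintro ⟨x, rfl⟩ t
    exact card_filter_le _ _
  · intro hc
    choose T hTS hTc using fun t => exists_subset_card_eq (hc t)
    refine ⟨fun i => decide (∃ t, i ∈ T t), funext fun t => ?_⟩
    rw [← hTc t]
    congr 1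
    ext i
    simp only [mem_filter, decide_eq_true_eq]
    refine ⟨fun ⟨hi, t', hit'⟩ => ?_, fun hi => ⟨hTS t hi, t, hi⟩⟩
    obtain rfl : t' = t := by
      by_contra hne
      exact disjoint_left.mp (hS hne) (hTS t' hit') hi
    exact hit'

section Blocks

variable {K m : ℕ}

theorem add_mul_add_le_two_mul_mul (k : Fin K) : K * m + k * m + m ≤ 2 * K * m := by
  have := Nat.mul_le_mul_right m k.isLt
  rw [Nat.succ_mul] at this
  linarith

/- With `d = 2 * K` and `n = 2 * K * m`: `none` is the first half `[0, K m)` and `some k` the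
block `[K m + k m, K m + (k + 1) m)` read by objectives `2k` and `2k+1`. -/
def coczBlock (K m : ℕ) : Option (Fin K) → Finset (Fin (2 * K * m))
  | none => (range (K * m)).attachFin fun i hi => by
      rw [mem_range] at hi
      linarith
  | some k => (Ico (K * m + k * m) (K * m + k * m + m)).attachFin fun i hi => by
      rw [mem_Ico] at hi
      linarith [add_mul_add_le_two_mul_mul (m := m) k]

@[simp]
theorem mem_coczBlock_none {i : Fin (2 * K * m)} : i ∈ coczBlock K m none ↔ (i : ℕ) < K * m := by
  simp [coczBlock]

@[simp]
theorem mem_coczBlock_some {k : Fin K} {i : Fin (2 * K * m)} :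
    i ∈ coczBlock K m (some k) ↔ K * m + k * m ≤ i ∧ (i : ℕ) < K * m + k * m + m := by
  simp [coczBlock]

theorem card_coczBlock_none : #(coczBlock K m none) = K * m := by
  simp [coczBlock, card_attachFin]

theorem card_coczBlock_some (k : Fin K) : #(coczBlock K m (some k)) = m := by
  simp [coczBlock, card_attachFin]

theorem filter_coczBlock_none (p : Fin (2 * K * m) → Prop) [DecidablePred p] :
    filter p (coczBlock K m none) =
      univ.filter fun i : Fin (2 * K * m) => (i : ℕ) < K * m ∧ p i := by
  ext i
  simp

theorem filter_coczBlock_some (k : Fin K) (p : Fin (2 * K * m) → Prop) [DecidablePred p] :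
    filter p (coczBlock K m (some k)) =
      univ.filter fun i : Fin (2 * K * m) =>
        K * m + k * m ≤ (i : ℕ) ∧ (i : ℕ) < K * m + k * m + m ∧ p i := by
  ext i
  simp [and_assoc]

theorem div_eq_of_mem_coczBlock_some {k : Fin K} {i : Fin (2 * K * m)}
    (hi : i ∈ coczBlock K m (some k)) : ((i : ℕ) - K * m) / m = k := by
  rw [mem_coczBlock_some] at hi
  apply Nat.div_eq_of_lt_le
  · omega
  · rw [Nat.add_one_mul (k : ℕ) m]
    omega

theorem pairwise_disjoint_coczBlock : Pairwise (Disjoint on coczBlock K m) := by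
  rintro (_ | k) (_ | k') hne <;> rw [onFun, disjoint_left] <;> intro i hi hi'
  · exact (hne rfl).elim
  · simp only [mem_coczBlock_none, mem_coczBlock_some] at hi hi'
    omega
  · simp only [mem_coczBlock_none, mem_coczBlock_some] at hi hi'
    omega
  · exact hne (congrArg some (Fin.ext
      ((div_eq_of_mem_coczBlock_some hi).symm.trans (div_eq_of_mem_coczBlock_some hi'))))

theorem card_piFinset_coczBlock :
    #(Fintype.piFinset fun t => range (#(coczBlock K m t) + 1)) = (K * m + 1) * (m + 1) ^ K := by
  simp [Fintype.card_piFinset, Fintype.prod_option, card_coczBlock_none, card_coczBlock_some]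

def coczOfCounts (K m : ℕ) (c : Option (Fin K) → ℕ) (j : Fin (2 * K)) : ℕ :=
  c none + if j.val % 2 = 0 then c (some ⟨j / 2, by omega⟩) else m - c (some ⟨j / 2, by omega⟩)

theorem cocz_eq_coczOfCounts (hK : 0 < K) (x : Fin (2 * K * m) → Bool) :
    cocz (2 * K) (2 * K * m) x =
      coczOfCounts K m fun t => #{i ∈ coczBlock K m t | x i = true} := by
  have half : 2 * K * m / 2 = K * m := by
    rw [mul_assoc]
    exact Nat.mul_div_cancel_left _ two_pos
  have block : 2 * K * m / (2 * K) = m := Nat.mul_div_cancel_left m (by omega)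
  funext j
  have hj : (j : ℕ) / 2 < K := by omega
  rw [cocz, coczOfCounts, half, block, filter_coczBlock_none]
  split_ifs
  · rw [filter_coczBlock_some]
  · rw [← filter_coczBlock_some ⟨j / 2, hj⟩ fun i => x i = false, card_filter_false_eq_sub,
      card_coczBlock_some]

theorem coczOfCounts_even (c : Option (Fin K) → ℕ) (k : Fin K) :
    coczOfCounts K m c ⟨2 * k, by omega⟩ = c none + c (some k) := by
  simp [coczOfCounts]

theorem coczOfCounts_odd (c : Option (Fin K) → ℕ) (k : Fin K) :
    coczOfCounts K m c ⟨2 * k + 1, by omega⟩ = c none + (m - c (some k)) := by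
  simp only [coczOfCounts, Nat.mul_add_mod_self_left, Nat.one_mod, one_ne_zero, if_false]
  exact congrArg (fun t => c none + (m - c (some t))) (Fin.ext (by dsimp only; omega))

theorem coczOfCounts_injOn (hK : 0 < K) :
    Set.InjOn (coczOfCounts K m) {c | ∀ k, c (some k) ≤ m} := by
  intro c hc c' hc' h
  have hnone : c none = c' none := by
    have heven := congrFun h ⟨2 * 0, by omega⟩
    have hodd := congrFun h ⟨2 * 0 + 1, by omega⟩
    rw [coczOfCounts_even c ⟨0, hK⟩, coczOfCounts_even c' ⟨0, hK⟩] at heven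
    rw [coczOfCounts_odd c ⟨0, hK⟩, coczOfCounts_odd c' ⟨0, hK⟩] at hodd
    have := hc ⟨0, hK⟩
    have := hc' ⟨0, hK⟩
    omega
  funext t
  rcases t with _ | k
  · exact hnone
  · have heven := congrFun h ⟨2 * k, by omega⟩
    rw [coczOfCounts_even, coczOfCounts_even] at heven
    omega

theorem coe_piFinset_coczBlock_subset :
    ↑(Fintype.piFinset fun t => range (#(coczBlock K m t) + 1)) ⊆
      {c : Option (Fin K) → ℕ | ∀ k, c (some k) ≤ m} := by
  intro c hc k
  rw [mem_coe, Fintype.mem_piFinset] at hc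
  simpa [card_coczBlock_some, Nat.lt_succ_iff] using hc (some k)

end Blocks

theorem stmt_11 (d n : ℕ) (hd : 0 < d) (hde : 2 ∣ d) (hdn : d ∣ n) :
    (Finset.univ.image (fun x : Fin n → Bool => cocz d n x)).card =
      (n / 2 + 1) * (n / d + 1) ^ (d / 2) := by
  obtain ⟨K, rfl⟩ := hde
  obtain ⟨m, rfl⟩ := hdn
  have hK : 0 < K := by omega
  have hcounts : (fun x => cocz (2 * K) (2 * K * m) x) =
      coczOfCounts K m ∘ fun x t => #{i ∈ coczBlock K m t | x i = true} :=
    funext (cocz_eq_coczOfCounts hK)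
  rw [hcounts, ← image_image, image_card_filter_eq_piFinset pairwise_disjoint_coczBlock,
    card_image_of_injOn ((coczOfCounts_injOn hK).mono coe_piFinset_coczBlock_subset),
    card_piFinset_coczBlock, mul_assoc 2 K m, Nat.mul_div_cancel_left _ two_pos, ← mul_assoc,
    Nat.mul_div_cancel_left _ (by omega), Nat.mul_div_cancel_left _ two_pos]
end
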